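/- Let F, G be cumulative distribution functions on ℝ of absolutely continuous distributions whose densities are both bounded by g_max, and suppose the L¹ distance ∫|F(s) − G(s)| ds ≤ W. Then for every τ ∈ ℝ, |F(τ) − G(τ)| ≤ √(2·g_max·W). -/

import Mathlib

open MeasureTheory Real Set

/-! If `|F τ - G τ| = a`, then since `F - G` is `g_max`-Lipschitz, `|F - G|` stays above the
line `a - g_max (s - τ)` on `[τ, τ + a / g_max]`; the area of that triangle, `a² / (2 g_max)`,
is at most `∫ |F - G| ≤ W`. -/

lemma abs_sub_le_mul_of_eq_integral_Iic {u H : ℝ → ℝ} {L : ℝ} (hu : Integrable u)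
    (huL : ∀ x, |u x| ≤ L) (hH : ∀ x, H x = ∫ y in Iic x, u y) {s t : ℝ} (hst : s ≤ t) :
    |H t - H s| ≤ L * (t - s) := by
  rw [hH, hH, intervalIntegral.integral_Iic_sub_Iic hu.integrableOn hu.integrableOn,
    ← abs_of_nonneg (sub_nonneg.2 hst)]
  exact intervalIntegral.norm_integral_le_of_norm_le_const fun x _ =>
    (Real.norm_eq_abs _).trans_le (huL x)

lemma sq_le_two_mul_mul_of_forall_mul_sub_le {a L I : ℝ} (ha : 0 ≤ a) (hL : 0 ≤ L)
    (h : ∀ t, 0 ≤ t → a * t - L * t ^ 2 / 2 ≤ I) : a ^ 2 ≤ 2 * L * I := by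
  rcases hL.eq_or_lt with rfl | hL
  · have hI : 0 ≤ I := by simpa using h 0 le_rfl
    have ha0 : a = 0 := by
      by_contra ha0
      have := h ((I + 1) / a) (div_nonneg (by linarith) ha)
      rw [mul_div_cancel₀ _ ha0] at this
      linarith
    simp [ha0]
  · have := h (a / L) (by positivity)
    field_simp at this
    linarith

lemma sq_abs_le_two_mul_mul_integral_abs {H : ℝ → ℝ} {L τ : ℝ} (hL : 0 ≤ L)
    (hH : ∀ s, τ ≤ s → |H s - H τ| ≤ L * (s - τ)) (hint : Integrable fun s => |H s|) :
    H τ ^ 2 ≤ 2 * L * ∫ s, |H s| := by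
  rw [← sq_abs]
  refine sq_le_two_mul_mul_of_forall_mul_sub_le (abs_nonneg _) hL fun t ht => ?_
  have hτt : τ ≤ τ + t := le_add_of_nonneg_right ht
  calc |H τ| * t - L * t ^ 2 / 2 = ∫ s in τ..τ + t, (|H τ| - L * (s - τ)) := by
        rw [intervalIntegral.integral_comp_sub_right (fun s => |H τ| - L * s),
          intervalIntegral.integral_sub intervalIntegrable_const
            ((continuous_const_mul L).intervalIntegrable _ _),
          intervalIntegral.integral_const_mul, integral_id, intervalIntegral.integral_const]
        simp only [smul_eq_mul]
        ring
    _ ≤ ∫ s in τ..τ + t, |H s| := by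
        refine intervalIntegral.integral_mono_on hτt
          ((by fun_prop : Continuous _).intervalIntegrable _ _) hint.intervalIntegrable
          fun s hs => ?_
        linarith [abs_sub_abs_le_abs_sub (H τ) (H s), abs_sub_comm (H τ) (H s), hH s hs.1]
    _ ≤ ∫ s, |H s| := by
        rw [intervalIntegral.integral_of_le hτt]
        exact setIntegral_le_integral hint (.of_forall fun s => abs_nonneg _)

theorem wasserstein_to_kolmogorov_general
    (f g : ℝ → ℝ) (gmax W : ℝ) (hgmax : 0 ≤ gmax)
    (hf0 : ∀ s, 0 ≤ f s) (hg0 : ∀ s, 0 ≤ g s)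
    (hfb : ∀ s, f s ≤ gmax) (hgb : ∀ s, g s ≤ gmax)
    (hfint : Integrable f) (hgint : Integrable g)
    (F G : ℝ → ℝ)
    (hF : ∀ τ, F τ = ∫ s in Set.Iic τ, f s)
    (hG : ∀ τ, G τ = ∫ s in Set.Iic τ, g s)
    (hFGint : Integrable (fun s => |F s - G s|))
    (hL1 : ∫ s, |F s - G s| ≤ W) :
    ∀ τ : ℝ, |F τ - G τ| ≤ sqrt (2 * gmax * W) := by
  intro τ
  have hdens : ∀ s, |f s - g s| ≤ gmax := fun s =>
    abs_sub_le_of_nonneg_of_le (hf0 s) (hfb s) (hg0 s) (hgb s)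
  have hFG : ∀ x, F x - G x = ∫ s in Iic x, (f s - g s) := fun x => by
    rw [hF, hG, integral_sub hfint.integrableOn hgint.integrableOn]
  have hLip : ∀ s, τ ≤ s → |(F s - G s) - (F τ - G τ)| ≤ gmax * (s - τ) := fun s hs =>
    abs_sub_le_mul_of_eq_integral_Iic (hfint.sub hgint) hdens hFG hs
  calc |F τ - G τ| ≤ sqrt (2 * gmax * ∫ s, |F s - G s|) :=
        abs_le_sqrt (sq_abs_le_two_mul_mul_integral_abs hgmax hLip hFGint)
    _ ≤ sqrt (2 * gmax * W) := by gcongr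

/-- Wasserstein-to-Kolmogorov bound: if `F, G` are CDFs of absolutely
continuous distributions with densities `f, g` bounded by `gmax`, and the
`L¹` distance of the CDFs is at most `W`, then every pointwise CDF gap is at
most `√(2 gmax W)`. -/
theorem wasserstein_to_kolmogorov
    (f g : ℝ → ℝ) (gmax W : ℝ) (hgmax : 0 ≤ gmax) (hW : 0 ≤ W)
    (hf0 : ∀ s, 0 ≤ f s) (hg0 : ∀ s, 0 ≤ g s)
    (hfb : ∀ s, f s ≤ gmax) (hgb : ∀ s, g s ≤ gmax)
    (hfint : Integrable f) (hgint : Integrable g)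
    (F G : ℝ → ℝ)
    (hF : ∀ τ, F τ = ∫ s in Set.Iic τ, f s)
    (hG : ∀ τ, G τ = ∫ s in Set.Iic τ, g s)
    (hFGint : Integrable (fun s => |F s - G s|))
    (hL1 : ∫ s, |F s - G s| ≤ W) :
    ∀ τ : ℝ, |F τ - G τ| ≤ sqrt (2 * gmax * W) :=
  wasserstein_to_kolmogorov_general f g gmax W hgmax hf0 hg0 hfb hgb hfint hgint F G hF hG hFGint
    hL1
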